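/- The bi-infinite sequence of wall labels obtained from the E_6 diagram with chosen middle vertex is periodic with period 4, with one period equal to (1, 3, 2, 3); in particular the walls in a fundamental domain of the ℤ-translation action carry exactly the labels 1, 3, 2, 3. -/
import Mathlib


/-- The labels (highest-root coefficients) of the vertices of the affine `Ẽ₆` diagram:
vertices `0,…,4` are the chain `v₁,…,v₅` (labels `1,2,3,2,1`), vertex `5` is the branch
vertex `w` (label `2`), and vertex `6` is the affine vertex `w'` (label `1`). -/
def affE6Label : Fin 7 → ℕ := ![1, 2, 3, 2, 1, 2, 1]

/-- `affE6InvDel d` is the Dynkin involution of the (disjoint union of) finite ADE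
diagram(s) obtained by deleting vertex `d` from the affine `Ẽ₆` diagram, acting on the
remaining vertices (and fixing `d` itself, by convention):
* deleting `v₁` (or `v₂`) leaves a diagram whose involution swaps `v₄,v₅` with `w,w'`;
* deleting `v₃` leaves `A₂ ⊔ A₂ ⊔ A₂`, swapping within each component;
* deleting `v₄` (or `v₅`) is symmetric to the first case;
* deleting `w` leaves `A₅ ⊔ A₁`, whose involution reflects the chain `v₁,…,v₅`;
* deleting the affine vertex `w'` leaves `E₆`, whose involution reflects the chain
  and fixes `v₃` and `w`. -/
def affE6InvDel : Fin 7 → Fin 7 → Fin 7 :=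
  ![![0, 1, 2, 5, 6, 3, 4],
    ![0, 1, 2, 5, 6, 3, 4],
    ![1, 0, 2, 4, 3, 6, 5],
    ![6, 5, 2, 3, 4, 1, 0],
    ![6, 5, 2, 3, 4, 1, 0],
    ![4, 3, 2, 1, 0, 5, 6],
    ![4, 3, 2, 1, 0, 5, 6]]

/-- One step of the wall-crossing iteration.  The state `(d, s)` records the shaded
vertex `d` about to be deleted and the other shaded vertex `s`.  Deleting `d`, the
Dynkin involution of the remaining diagram moves `s` to `affE6InvDel d s`; the next
step deletes the other shaded vertex. -/
def affE6Step : Fin 7 × Fin 7 → Fin 7 × Fin 7 :=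
  fun p => (affE6InvDel p.1 p.2, p.1)

/-- The initial state: the shaded vertices are the affine vertex `w'` (label `1`, deleted
first) and the chosen middle vertex `v₃` (label `3`). -/
def affE6Init : Fin 7 × Fin 7 := (6, 2)

/-- The bi-infinite sequence of wall labels obtained from the `E₆` diagram with chosen
middle vertex — i.e. the labels of the successively deleted shaded vertices in the
iteration — is periodic with period `4`, with one period equal to `(1, 3, 2, 3)`;
in particular the walls in a fundamental domain of the `ℤ`-translation action carry
exactly the labels `1, 3, 2, 3`. -/
theorem affE6_wall_labels :
    ∃ L : ℤ → ℕ,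
      (∀ n : ℕ, L n = affE6Label (affE6Step^[n] affE6Init).1) ∧
      (∀ m : ℤ, L (m + 4) = L m) ∧
      L 0 = 1 ∧ L 1 = 3 ∧ L 2 = 2 ∧ L 3 = 3 := by

  refine ⟨fun m => affE6Label (affE6Step^[(m % 4).toNat] affE6Init).1, ?_, ?_, ?_, ?_, ?_, ?_⟩
  · intro n
    have key : affE6Step^[4] affE6Init = affE6Init := by decide
    have hper : ∀ k : ℕ, affE6Step^[4 * k] affE6Init = affE6Init := by
      intro k
      induction k with
      | zero => simp
      | succ k ih =>
        rw [Nat.mul_succ, Function.iterate_add_apply, key, ih]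
    have h1 : ((n : ℤ) % 4).toNat = n % 4 := by
      omega
    simp only []
    rw [h1]
    conv_rhs => rw [show n = n % 4 + 4 * (n / 4) by omega]
    rw [Function.iterate_add_apply, hper]
  · intro m
    have : (m + 4) % 4 = m % 4 := by omega
    simp only [this]
  · decide
  · decide
  · decide
  · decide
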